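/- arXiv:2410.09440 — 2 statements merged into one kernel-verified Lean document; each statement's English description precedes it below -/
import Mathlib

section
/- For all natural numbers M ≥ 2, K ≥ 1, L ≥ 1, the number of unordered pairs of distinct vertices of the spider graph Sp(M,K,L) at graph distance exactly L + 1 equals M·K(K−1)/2·L + KM(M − 1) + M·K²(M−1)/2·(L − 1). -/
/-- Vertices of the spider graph `Sp(M,K,L)`: `M` core vertices plus
leg vertices `v_{m,k,ℓ}` for `m < M`, `k < K`, `ℓ < L`. -/
abbrev SpiderVertex (M K L : ℕ) := Fin M ⊕ (Fin M × Fin K × Fin L)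

/-- Base relation generating the edges of the spider graph. -/
def spiderRel (M K L : ℕ) : SpiderVertex M K L → SpiderVertex M K L → Prop
  | Sum.inl _, Sum.inl _ => True
  | Sum.inl m, Sum.inr (m', _, l) => m = m' ∧ (l : ℕ) = 0
  | Sum.inr _, Sum.inl _ => False
  | Sum.inr (m, k, l), Sum.inr (m', k', l') =>
      m = m' ∧ k = k' ∧ (l : ℕ) + 1 = (l' : ℕ)

/-- The spider graph `Sp(M,K,L)`. -/
def spiderGraph (M K L : ℕ) : SimpleGraph (SpiderVertex M K L) :=
  SimpleGraph.fromRel (spiderRel M K L)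

instance (M K L : ℕ) : DecidableRel (spiderRel M K L) := fun x y =>
  match x, y with
  | Sum.inl _, Sum.inl _ => inferInstanceAs (Decidable True)
  | Sum.inl m, Sum.inr (m', _, l) => inferInstanceAs (Decidable (m = m' ∧ (l : ℕ) = 0))
  | Sum.inr _, Sum.inl _ => inferInstanceAs (Decidable False)
  | Sum.inr (m, k, l), Sum.inr (m', k', l') =>
      inferInstanceAs (Decidable (m = m' ∧ k = k' ∧ (l : ℕ) + 1 = (l' : ℕ)))

instance (M K L : ℕ) : DecidableRel (spiderGraph M K L).Adj := fun x y =>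
  inferInstanceAs (Decidable (x ≠ y ∧ (spiderRel M K L x y ∨ spiderRel M K L y x)))

/-- `alphaSpider M K L j` is the number of unordered pairs of distinct vertices of
`Sp(M,K,L)` at graph distance exactly `j`. -/
noncomputable def alphaSpider (M K L j : ℕ) : ℕ :=
  Nat.card {p : Sym2 (SpiderVertex M K L) //
    ¬ p.IsDiag ∧ ∀ u v : SpiderVertex M K L, p = s(u, v) →
      (spiderGraph M K L).dist u v = j}

/-!
The distance in `Sp(M,K,L)` has a closed form `Spider.dist`: it grows by at most one along an
edge, and from every vertex other than the target some neighbour is one step closer, so it is the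
graph distance. The pairs at distance `L + 1` are the edges of the distance-`(L + 1)` graph, so by
the handshake lemma twice their number is the sum over `v` of the number of vertices at distance
`L + 1` from `v`. For a core vertex these are the tips of the legs of the other arms; for the vertex
at level `l` of a leg they are the vertices at level `L - 1 - l` of the other legs of its arm, at
level `L - 2 - l` of the legs of the other arms, and, when `l = L - 1`, the other cores.
-/

open Finset

namespace SimpleGraph

theorem Walk.le_length_of_adj_le_add_one {V : Type*} {G : SimpleGraph V} {d : V → V → ℕ}
    (hself : ∀ v, d v v = 0) (hadj : ∀ u w v, G.Adj u w → d u v ≤ d w v + 1) {u v : V}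
    (p : G.Walk u v) : d u v ≤ p.length := by
  induction p with
  | nil => simp [hself]
  | cons h _ ih => simpa using (hadj _ _ _ h).trans (Nat.add_le_add_right ih 1)

variable {V : Type*} (G : SimpleGraph V)

theorem exists_walk_length_eq_of_descent {d : V → V → ℕ} (hself : ∀ v, d v v = 0)
    (hdesc : ∀ u v, u ≠ v → ∃ w, G.Adj u w ∧ d w v + 1 = d u v) (u v : V) :
    ∃ p : G.Walk u v, p.length = d u v := by
  induction hn : d u v generalizing u with
  | zero =>
    obtain rfl : u = v := by
      by_contra huv
      obtain ⟨w, -, hw⟩ := hdesc u v huv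
      omega
    exact ⟨.nil, rfl⟩
  | succ n ih =>
    have huv : u ≠ v := by rintro rfl; simp [hself] at hn
    obtain ⟨w, hadj, hw⟩ := hdesc u v huv
    obtain ⟨p, hp⟩ := ih w (by omega)
    exact ⟨.cons hadj p, by simp [hp]⟩

theorem dist_eq_of_descent {d : V → V → ℕ} (hself : ∀ v, d v v = 0)
    (hadj : ∀ u w v, G.Adj u w → d u v ≤ d w v + 1)
    (hdesc : ∀ u v, u ≠ v → ∃ w, G.Adj u w ∧ d w v + 1 = d u v) (u v : V) :
    G.dist u v = d u v := by
  obtain ⟨p, hp⟩ := G.exists_walk_length_eq_of_descent hself hdesc u v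
  obtain ⟨q, hq⟩ := p.reachable.exists_walk_length_eq_dist
  exact le_antisymm (hp ▸ G.dist_le p) (hq ▸ q.le_length_of_adj_le_add_one hself hadj)

def distGraph (j : ℕ) : SimpleGraph V where
  Adj u v := u ≠ v ∧ G.dist u v = j
  symm := ⟨fun _ _ h => ⟨h.1.symm, G.dist_comm ▸ h.2⟩⟩
  loopless := ⟨fun _ h => h.1 rfl⟩

theorem natCard_pairs_dist_eq_natCard_edgeSet (j : ℕ) :
    Nat.card {p : Sym2 V // ¬ p.IsDiag ∧ ∀ u v, p = s(u, v) → G.dist u v = j} =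
      Nat.card (G.distGraph j).edgeSet := by
  refine Nat.card_congr (Equiv.subtypeEquivRight fun p => ?_)
  induction p using Sym2.ind with
  | _ u v =>
    simp only [Sym2.mk_isDiag_iff, mem_edgeSet, distGraph, Sym2.eq_iff]
    constructor
    · exact fun h => ⟨h.1, h.2 u v (.inl ⟨rfl, rfl⟩)⟩
    · rintro ⟨huv, h⟩
      refine ⟨huv, ?_⟩
      rintro a b (⟨rfl, rfl⟩ | ⟨rfl, rfl⟩)
      · exact h
      · rwa [G.dist_comm]

theorem two_mul_natCard_pairs_dist_eq [Fintype V] {j : ℕ} (hj : j ≠ 0) :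
    2 * Nat.card {p : Sym2 V // ¬ p.IsDiag ∧ ∀ u v, p = s(u, v) → G.dist u v = j} =
      ∑ v, #{w | G.dist v w = j} := by
  classical
  rw [natCard_pairs_dist_eq_natCard_edgeSet, Nat.card_eq_fintype_card, ← edgeFinset_card,
    ← sum_degrees_eq_twice_card_edges]
  refine sum_congr rfl fun v _ => ?_
  rw [← card_neighborFinset_eq_degree, neighborFinset_eq_filter]
  congr 1
  ext w
  simp only [mem_filter, mem_univ, true_and]
  refine ⟨And.right, fun h => ⟨?_, h⟩⟩
  rintro rfl
  exact hj (by simpa using h.symm)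

end SimpleGraph

theorem Fintype.sum_eq_add_card_sub_one_mul {α : Type*} [Fintype α] [DecidableEq α]
    (f : α → ℕ) (a : α) {y : ℕ} (hf : ∀ b, b ≠ a → f b = y) :
    ∑ b, f b = f a + (Fintype.card α - 1) * y := by
  rw [Fintype.sum_eq_add_sum_compl a, sum_const_nat fun b hb => hf b (by simpa using hb),
    card_compl, card_singleton]

theorem Fin.sum_ite_add_val_eq (L c n : ℕ) :
    ∑ l : Fin L, (if c + l = n then 1 else 0) = if c ≤ n ∧ n < c + L then 1 else 0 := by
  split_ifs with h
  · rw [sum_eq_single_of_mem (⟨n - c, by omega⟩ : Fin L) (mem_univ _)]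
    · simp only [add_tsub_cancel_of_le h.1, ↓reduceIte]
    · intro l _ hl
      rw [if_neg]
      contrapose! hl
      ext
      simp only
      omega
  · exact sum_eq_zero fun l _ => if_neg (by omega)

namespace Spider

variable {M K L : ℕ}

@[simp]
theorem adj_inl_inl {m m' : Fin M} :
    (spiderGraph M K L).Adj (.inl m) (.inl m') ↔ m ≠ m' := by
  simp [spiderGraph, spiderRel]

@[simp]
theorem adj_inl_inr {m m' : Fin M} {k : Fin K} {l : Fin L} :
    (spiderGraph M K L).Adj (.inl m) (.inr (m', k, l)) ↔ m = m' ∧ (l : ℕ) = 0 := by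
  simp [spiderGraph, spiderRel]

@[simp]
theorem adj_inr_inl {m m' : Fin M} {k : Fin K} {l : Fin L} :
    (spiderGraph M K L).Adj (.inr (m, k, l)) (.inl m') ↔ m = m' ∧ (l : ℕ) = 0 := by
  simp [spiderGraph, spiderRel, eq_comm]

@[simp]
theorem adj_inr_inr {m m' : Fin M} {k k' : Fin K} {l l' : Fin L} :
    (spiderGraph M K L).Adj (.inr (m, k, l)) (.inr (m', k', l')) ↔
      m = m' ∧ k = k' ∧ ((l : ℕ) + 1 = l' ∨ (l' : ℕ) + 1 = l) := by
  simp only [spiderGraph, SimpleGraph.fromRel_adj, ne_eq, Sum.inr.injEq, Prod.mk.injEq,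
    Fin.ext_iff, not_and, spiderRel]
  omega

/-- Levels are `0`-based: `v_{m,k,l}` is at distance `l + 1` from its core `c_m`. -/
def dist : SpiderVertex M K L → SpiderVertex M K L → ℕ
  | .inl m, .inl m' => if m = m' then 0 else 1
  | .inl m, .inr (m', _, l) => (if m = m' then 1 else 2) + l
  | .inr (m, _, l), .inl m' => (if m = m' then 1 else 2) + l
  | .inr (m, k, l), .inr (m', k', l') =>
      if m = m' then (if k = k' then Nat.dist l l' else l + 2 + l') else l + 3 + l'

/- Propositional rather than definitional unfoldings of `dist`: `simp` then rebuilds the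
`Decidable` instances of the `if`s containing `dist`, so sum lemmas can match them. -/
theorem dist_inl_inl (m m' : Fin M) :
    dist (.inl m : SpiderVertex M K L) (.inl m') = if m = m' then 0 else 1 := by
  rw [dist]

theorem dist_inl_inr (m m' : Fin M) (k : Fin K) (l : Fin L) :
    dist (.inl m) (.inr (m', k, l)) = (if m = m' then 1 else 2) + l := by
  rw [dist]

theorem dist_inr_inl (m m' : Fin M) (k : Fin K) (l : Fin L) :
    dist (.inr (m, k, l)) (.inl m') = (if m = m' then 1 else 2) + l := by
  rw [dist]

theorem dist_inr_inr (m m' : Fin M) (k k' : Fin K) (l l' : Fin L) :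
    dist (.inr (m, k, l)) (.inr (m', k', l')) =
      if m = m' then (if k = k' then Nat.dist l l' else l + 2 + l') else l + 3 + l' := by
  rw [dist]

theorem dist_self (v : SpiderVertex M K L) : dist v v = 0 := by
  rcases v with m | ⟨m, k, l⟩ <;> simp [dist]

theorem dist_le_of_adj {u w : SpiderVertex M K L} (h : (spiderGraph M K L).Adj u w)
    (v : SpiderVertex M K L) : dist u v ≤ dist w v + 1 := by
  rcases u with m | ⟨m, k, l⟩ <;> rcases w with m' | ⟨m', k', l'⟩ <;>
    rcases v with c | ⟨c, kc, lc⟩ <;>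
    simp only [adj_inl_inl, adj_inl_inr, adj_inr_inl, adj_inr_inr] at h <;>
    simp only [dist, Nat.dist] <;> split_ifs <;> omega

/-- The witness is the neighbour one level down, the core `c_m` when `l = 0`. -/
theorem exists_adj_dist_add_one_of_below {m : Fin M} {k : Fin K} {l : Fin L}
    {v : SpiderVertex M K L} (hv : ∀ l' : Fin L, v = .inr (m, k, l') → (l' : ℕ) < l) :
    ∃ w, (spiderGraph M K L).Adj (.inr (m, k, l)) w ∧
      dist w v + 1 = dist (.inr (m, k, l)) v := by
  refine ⟨if hl : (l : ℕ) = 0 then .inl m else .inr (m, k, ⟨l - 1, by omega⟩), ?_, ?_⟩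
  · split_ifs with hl
    · simp [hl]
    · simp only [adj_inr_inr, true_and]
      omega
  · rcases v with m' | ⟨m', k', l'⟩
    · split_ifs <;> simp only [dist] <;> split_ifs <;> omega
    · simp only [Sum.inr.injEq, Prod.mk.injEq, Fin.val_fin_lt, and_imp,
        forall_apply_eq_imp_iff₂] at hv
      split_ifs <;> simp only [dist, Nat.dist] <;> split_ifs <;> omega

theorem exists_adj_dist_add_one {u v : SpiderVertex M K L} (huv : u ≠ v) :
    ∃ w, (spiderGraph M K L).Adj u w ∧ dist w v + 1 = dist u v := by
  rcases u with m | ⟨m, k, l⟩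
  · rcases v with m' | ⟨m', k, l⟩
    · have hm : m ≠ m' := fun h => huv (h ▸ rfl)
      exact ⟨.inl m', adj_inl_inl.2 hm, by simp [dist, hm]⟩
    · by_cases hm : m = m'
      · subst hm
        exact ⟨.inr (m, k, ⟨0, l.pos⟩), by simp, by simp [dist, Nat.dist]; omega⟩
      · exact ⟨.inl m', by simpa, by simp [dist, hm]; omega⟩
  · by_cases hup : ∃ l' : Fin L, v = .inr (m, k, l') ∧ l < l'
    · obtain ⟨l', rfl, hll'⟩ := hup
      exact ⟨.inr (m, k, ⟨l + 1, by omega⟩), by simp, by simp [dist, Nat.dist]; omega⟩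
    · refine exists_adj_dist_add_one_of_below fun l' hv => ?_
      subst hv
      push Not at hup
      exact lt_of_le_of_ne (hup l' rfl) fun h => huv (by rw [Fin.ext h])

theorem dist_spiderGraph (u v : SpiderVertex M K L) : (spiderGraph M K L).dist u v = dist u v :=
  SimpleGraph.dist_eq_of_descent _ dist_self (fun _ _ v h => dist_le_of_adj h v)
    (fun _ _ h => exists_adj_dist_add_one h) u v

theorem card_sphere_inl (hL : 1 ≤ L) (m : Fin M) :
    #{w : SpiderVertex M K L | dist (.inl m) w = L + 1} = (M - 1) * K := by
  rw [card_filter, Fintype.sum_sum_type]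
  simp only [Fintype.sum_prod_type, dist_inl_inl, dist_inl_inr]
  rw [Fintype.sum_eq_add_card_sub_one_mul _ m (y := 0),
    Fintype.sum_eq_add_card_sub_one_mul _ m (y := K)]
  · simp only [↓reduceIte, Fin.sum_ite_add_val_eq, sum_const, card_univ, Fintype.card_fin]
    rw [if_neg (by omega), if_neg (by omega)]
    simp
  · intro m' hm'
    simp only [if_neg hm'.symm, Fin.sum_ite_add_val_eq, sum_const, card_univ, Fintype.card_fin]
    rw [if_pos (by omega), smul_eq_mul, mul_one]
  · intro m' hm'
    rw [if_neg hm'.symm, if_neg (by omega)]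

theorem card_sphere_inr (m : Fin M) (k : Fin K) (l : Fin L) :
    #{w : SpiderVertex M K L | dist (.inr (m, k, l)) w = L + 1} =
      (M - 1) * (if (l : ℕ) = L - 1 then 1 else 0) + (K - 1) +
        (M - 1) * K * (if (l : ℕ) < L - 1 then 1 else 0) := by
  have same_leg : ∑ l' : Fin L, (if Nat.dist l l' = L + 1 then 1 else 0) = 0 :=
    sum_eq_zero fun l' _ => if_neg (by simp only [Nat.dist]; omega)
  rw [card_filter, Fintype.sum_sum_type]
  simp only [Fintype.sum_prod_type, dist_inr_inl, dist_inr_inr]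
  rw [Fintype.sum_eq_add_card_sub_one_mul _ m (y := if (l : ℕ) = L - 1 then 1 else 0),
    Fintype.sum_eq_add_card_sub_one_mul _ m (y := K * if (l : ℕ) < L - 1 then 1 else 0),
    Fintype.sum_eq_add_card_sub_one_mul _ k (y := 1)]
  · simp only [↓reduceIte, same_leg, Fintype.card_fin]
    rw [if_neg (by omega)]
    ring
  · intro k' hk'
    simp only [↓reduceIte, if_neg hk'.symm, Fin.sum_ite_add_val_eq]
    rw [if_pos (by omega)]
  · intro m' hm'
    simp only [if_neg hm'.symm, Fin.sum_ite_add_val_eq, sum_const, card_univ, Fintype.card_fin,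
      smul_eq_mul]
    congr 2
    simp only [eq_iff_iff]
    omega
  · intro m' hm'
    simp only [if_neg hm'.symm]
    congr 1
    simp only [eq_iff_iff]
    omega

theorem sum_card_sphere (hL : 1 ≤ L) :
    ∑ v : SpiderVertex M K L, #{w | dist v w = L + 1} =
      M * ((M - 1) * K) + M * (K * ((M - 1) + L * (K - 1) + (M - 1) * K * (L - 1))) := by
  have h_last : ∑ l : Fin L, (if (l : ℕ) = L - 1 then 1 else 0) = 1 := by
    rw [Fin.sum_univ_eq_sum_range (fun l => if l = L - 1 then 1 else 0), sum_ite_eq',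
      if_pos (mem_range.2 (by omega))]
  have h_below_last : ∑ l : Fin L, (if (l : ℕ) < L - 1 then 1 else 0) = L - 1 := by
    rw [sum_boole, Fin.card_filter_val_lt]
    simp
  rw [Fintype.sum_sum_type]
  simp only [Fintype.sum_prod_type, card_sphere_inl hL, card_sphere_inr, sum_add_distrib,
    ← mul_sum, h_last, h_below_last, sum_const, card_univ, Fintype.card_prod, Fintype.card_fin,
    smul_eq_mul]
  ring

end Spider

theorem spider_alpha_Lplus1_general (M K L : ℕ) (hL : 1 ≤ L) :
    alphaSpider M K L (L + 1) =
      M * K * (K - 1) / 2 * L + K * M * (M - 1) + M * K ^ 2 * (M - 1) / 2 * (L - 1) := by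
  have hcount : 2 * alphaSpider M K L (L + 1) =
      M * ((M - 1) * K) + M * (K * ((M - 1) + L * (K - 1) + (M - 1) * K * (L - 1))) := by
    rw [alphaSpider, SimpleGraph.two_mul_natCard_pairs_dist_eq _ (Nat.succ_ne_zero L)]
    simp only [Spider.dist_spiderGraph]
    exact Spider.sum_card_sphere hL
  obtain ⟨a, ha⟩ : 2 ∣ M * K * (K - 1) := by
    rw [mul_assoc]
    exact (Nat.even_mul_pred_self K).two_dvd.mul_left M
  obtain ⟨c, hc⟩ : 2 ∣ M * K ^ 2 * (M - 1) := by
    rw [show M * K ^ 2 * (M - 1) = K ^ 2 * (M * (M - 1)) by ring]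
    exact (Nat.even_mul_pred_self M).two_dvd.mul_left _
  rw [ha, hc, Nat.mul_div_cancel_left _ two_pos, Nat.mul_div_cancel_left _ two_pos]
  apply Nat.eq_of_mul_eq_mul_left two_pos
  rw [hcount]
  linear_combination L * ha + (L - 1) * hc

/-- For all `M ≥ 2`, `K ≥ 1`, `L ≥ 1`, the number of unordered pairs of
distinct vertices of `Sp(M,K,L)` at distance exactly `L + 1` equals
`M·K(K−1)/2·L + KM(M−1) + M·K²(M−1)/2·(L−1)`. -/
theorem spider_alpha_Lplus1 (M K L : ℕ) (hM : 2 ≤ M) (hK : 1 ≤ K) (hL : 1 ≤ L) :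
    alphaSpider M K L (L + 1) =
      M * K * (K - 1) / 2 * L + K * M * (M - 1) + M * K ^ 2 * (M - 1) / 2 * (L - 1) :=
  spider_alpha_Lplus1_general M K L hL
end

section
/- For all natural numbers M ≥ 2, K ≥ 1, L ≥ 2, and for every i with 2 ≤ i ≤ L, the number of unordered pairs of distinct vertices of the spider graph Sp(M,K,L) at graph distance exactly L + i equals M·K(K−1)/2·(L − i + 1) + M·K²(M−1)/2·(L − i + 2). -/
/-! Distances in `Sp(M,K,L)` are explicit: `v_{m,k,ℓ}` lies at distance `ℓ + 1` from `c_m`, and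
a shortest path between two different legs runs through the core. The formula is a lower bound
because it changes by at most one along every edge, and an upper bound by explicit walks.
A distance `L + i ≥ L + 2` is attained only by leg vertices `v_{m,k,ℓ}`, `v_{m',k',ℓ'}` on
different legs, with `ℓ + ℓ' + 2 = L + i` if `m = m'` and `ℓ + ℓ' + 3 = L + i` otherwise;
counting these solutions gives the number of ordered pairs, which is `2 α_{L+i}`. -/

open Finset

namespace SimpleGraph

variable {V : Type*} {G : SimpleGraph V}

theorem Walk.apply_le_apply_add_length {f : V → ℕ} (hf : ∀ ⦃y z⦄, G.Adj y z → f z ≤ f y + 1)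
    {x y : V} (w : G.Walk x y) : f y ≤ f x + w.length := by
  induction w with
  | nil => simp
  | cons h _ ih => have := hf h; rw [Walk.length_cons]; omega

theorem two_mul_natCard_sym2_dist_eq [Fintype V] [DecidableEq V] (G : SimpleGraph V) (j : ℕ) :
    2 * Nat.card {p : Sym2 V // ¬ p.IsDiag ∧ ∀ u v, p = s(u, v) → G.dist u v = j} =
      #{q : V × V | q.1 ≠ q.2 ∧ G.dist q.1 q.2 = j} := by
  classical
  let H := fromRel fun u v => G.dist u v = j
  have hH : ∀ u v, H.Adj u v ↔ u ≠ v ∧ G.dist u v = j := by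
    intro u v
    rw [fromRel_adj, dist_comm, or_self]
  have hmem : ∀ p : Sym2 V, (¬ p.IsDiag ∧ ∀ u v, p = s(u, v) → G.dist u v = j) ↔ p ∈ H.edgeSet := by
    refine Sym2.ind fun u v => ?_
    rw [mem_edgeSet, hH, Sym2.mk_isDiag_iff]
    refine and_congr_right fun _ => ⟨fun h => h u v rfl, fun h a b hab => ?_⟩
    rcases Sym2.eq_iff.mp hab with ⟨rfl, rfl⟩ | ⟨rfl, rfl⟩
    · exact h
    · rwa [dist_comm]
  rw [Nat.card_congr (Equiv.subtypeEquivRight hmem), Nat.card_eq_fintype_card,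
    ← edgeFinset_card, two_mul_card_edgeFinset]
  exact congrArg card (filter_congr fun q _ => hH q.1 q.2)

end SimpleGraph

theorem card_fin_add_eq {L c : ℕ} (hc : L ≤ c + 1) :
    #{p : Fin L × Fin L | (p.1 : ℕ) + p.2 = c} = 2 * L - 1 - c := by
  have hIco : #(Ico (c + 1 - L) L) = 2 * L - 1 - c := by rw [Nat.card_Ico]; omega
  rw [← hIco]
  refine card_nbij (fun p => p.1) (fun p hp => ?_) (fun p hp q hq hpq => ?_) (fun a ha => ?_) <;>
    simp only [coe_filter, mem_univ, true_and, Set.mem_ofPred_eq, coe_Ico, Set.mem_Ico] at *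
  · omega
  · exact Prod.ext (Fin.ext hpq) (Fin.ext (by omega))
  · exact ⟨(⟨a, ha.2⟩, ⟨c - a, by omega⟩), by simp only [Set.mem_ofPred_eq]; omega, rfl⟩

section Spider

open SimpleGraph

variable {M K L : ℕ}

def spiderDist : SpiderVertex M K L → SpiderVertex M K L → ℕ
  | .inl m, .inl m' => if m = m' then 0 else 1
  | .inl m, .inr (m', _, l) => if m = m' then l + 1 else l + 2
  | .inr (m, _, l), .inl m' => if m = m' then l + 1 else l + 2
  | .inr (m, k, l), .inr (m', k', l') =>
      if m = m' then (if k = k' then (l - l' : ℕ) + (l' - l : ℕ) else l + l' + 2)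
      else l + l' + 3

theorem spiderDist_self (x : SpiderVertex M K L) : spiderDist x x = 0 := by
  rcases x with m | ⟨m, k, l⟩ <;> simp [spiderDist]

theorem spiderDist_comm (x y : SpiderVertex M K L) : spiderDist x y = spiderDist y x := by
  rcases x with m | ⟨m, k, l⟩ <;> rcases y with m' | ⟨m', k', l'⟩ <;>
    simp only [spiderDist, eq_comm, add_comm]

theorem spiderDist_le_of_adj (x : SpiderVertex M K L) {y z : SpiderVertex M K L}
    (h : (spiderGraph M K L).Adj y z) : spiderDist x z ≤ spiderDist x y + 1 := by
  obtain ⟨-, h⟩ := (fromRel_adj _ y z).mp h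
  rcases x with m | ⟨m, k, l⟩ <;> rcases y with m1 | ⟨m1, k1, l1⟩ <;>
    rcases z with m2 | ⟨m2, k2, l2⟩ <;>
    simp only [spiderRel, or_false, false_or, true_or] at h <;>
    simp only [spiderDist] <;> split_ifs <;> grind

theorem spiderGraph_adj_inl_inl {m m' : Fin M} (h : m ≠ m') :
    (spiderGraph M K L).Adj (.inl m) (.inl m') :=
  (fromRel_adj _ _ _).mpr ⟨by simpa using h, .inl trivial⟩

theorem spiderGraph_adj_inl_inr (m : Fin M) (k : Fin K) {l : Fin L} (h : (l : ℕ) = 0) :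
    (spiderGraph M K L).Adj (.inl m) (.inr (m, k, l)) :=
  (fromRel_adj _ _ _).mpr ⟨by simp, .inl ⟨rfl, h⟩⟩

theorem spiderGraph_adj_inr_inr (m : Fin M) (k : Fin K) {l l' : Fin L} (h : (l : ℕ) + 1 = l') :
    (spiderGraph M K L).Adj (.inr (m, k, l)) (.inr (m, k, l')) :=
  (fromRel_adj _ _ _).mpr ⟨by simp only [ne_eq, Sum.inr.injEq, Prod.mk.injEq, Fin.ext_iff, true_and]; omega,
    .inl ⟨rfl, rfl, h⟩⟩

theorem exists_walk_inr_inr_length (m : Fin M) (k : Fin K) (n : ℕ) {l l' : Fin L}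
    (h : (l : ℕ) + n = l') :
    ∃ w : (spiderGraph M K L).Walk (.inr (m, k, l)) (.inr (m, k, l')), w.length = n := by
  induction n generalizing l' with
  | zero => obtain rfl : l = l' := Fin.ext h; exact ⟨.nil, rfl⟩
  | succ n ih =>
    obtain ⟨w, hw⟩ := ih (l' := ⟨l + n, by omega⟩) rfl
    exact ⟨w.concat (spiderGraph_adj_inr_inr m k (by dsimp only; omega)), by simp [hw]⟩

theorem exists_walk_inl_inr_length (m : Fin M) (k : Fin K) (l : Fin L) :
    ∃ w : (spiderGraph M K L).Walk (.inl m) (.inr (m, k, l)), w.length = l + 1 := by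
  obtain ⟨w, hw⟩ := exists_walk_inr_inr_length m k l (l := ⟨0, l.pos⟩) (l' := l) (by simp)
  exact ⟨.cons (spiderGraph_adj_inl_inr m k rfl) w, by simp [hw]⟩

theorem exists_walk_inl_length (m : Fin M) (y : SpiderVertex M K L) :
    ∃ w : (spiderGraph M K L).Walk (.inl m) y, w.length = spiderDist (.inl m) y := by
  rcases y with m' | ⟨m', k, l⟩ <;> by_cases hm : m = m'
  · subst hm; exact ⟨.nil, by simp [spiderDist]⟩
  · exact ⟨.cons (spiderGraph_adj_inl_inl hm) .nil, by simp [spiderDist, hm]⟩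
  · subst hm; simpa [spiderDist] using exists_walk_inl_inr_length m k l
  · obtain ⟨w, hw⟩ := exists_walk_inl_inr_length m' k l
    exact ⟨.cons (spiderGraph_adj_inl_inl hm) w, by simp [spiderDist, hm, hw]⟩

theorem exists_walk_length_spiderDist (x y : SpiderVertex M K L) :
    ∃ w : (spiderGraph M K L).Walk x y, w.length = spiderDist x y := by
  rcases x with m | ⟨m, k, l⟩
  · exact exists_walk_inl_length m y
  rcases y with m' | ⟨m', k', l'⟩
  · obtain ⟨w, hw⟩ := exists_walk_inl_length m' (.inr (m, k, l))
    exact ⟨w.reverse, by rw [Walk.length_reverse, hw, spiderDist_comm]⟩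
  by_cases hleg : m = m' ∧ k = k'
  · obtain ⟨rfl, rfl⟩ := hleg
    rcases le_total l l' with h | h
    · obtain ⟨w, hw⟩ := exists_walk_inr_inr_length m k (l' - l) (l := l) (l' := l') (by omega)
      exact ⟨w, by simp only [hw, spiderDist, if_pos]; omega⟩
    · obtain ⟨w, hw⟩ := exists_walk_inr_inr_length m k (l - l') (l := l') (l' := l) (by omega)
      exact ⟨w.reverse, by simp only [Walk.length_reverse, hw, spiderDist, if_pos]; omega⟩
  · obtain ⟨w₁, hw₁⟩ := exists_walk_inl_inr_length m k l
    obtain ⟨w₂, hw₂⟩ := exists_walk_inl_length m (.inr (m', k', l'))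
    refine ⟨w₁.reverse.append w₂, ?_⟩
    simp only [Walk.length_append, Walk.length_reverse, hw₁, hw₂, spiderDist]
    split_ifs <;> simp_all <;> omega

theorem spiderGraph_dist (x y : SpiderVertex M K L) :
    (spiderGraph M K L).dist x y = spiderDist x y := by
  obtain ⟨w, hw⟩ := exists_walk_length_spiderDist x y
  obtain ⟨w', hw'⟩ := Reachable.exists_walk_length_eq_dist ⟨w⟩
  have hlower := w'.apply_le_apply_add_length fun _ _ h => spiderDist_le_of_adj x h
  have hupper := dist_le w
  rw [spiderDist_self] at hlower
  omega


theorem spiderDist_inl_le (m : Fin M) (y : SpiderVertex M K L) :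
    spiderDist (.inl m) y ≤ L + 1 := by
  rcases y with m' | ⟨m', k, l⟩ <;> simp only [spiderDist] <;> split_ifs <;> omega

theorem spiderDist_inr_inr_eq_iff {j : ℕ} (hj : L ≤ j) {m m' : Fin M} {k k' : Fin K}
    {l l' : Fin L} :
    spiderDist (.inr (m, k, l)) (.inr (m', k', l')) = j ↔
      m = m' ∧ k ≠ k' ∧ l + l' + 2 = j ∨ m ≠ m' ∧ l + l' + 3 = j := by
  simp only [spiderDist]
  split_ifs <;> simp_all; omega

theorem card_spiderDist_eq {j : ℕ} (hj : L + 2 ≤ j) :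
    #{q : SpiderVertex M K L × SpiderVertex M K L | q.1 ≠ q.2 ∧ spiderDist q.1 q.2 = j} =
      M * (K * (K - 1)) * (2 * L + 1 - j) + M * (M - 1) * K ^ 2 * (2 * L + 2 - j) := by
  let φ : (Fin M × Fin M) × (Fin K × Fin K) × (Fin L × Fin L) →
      SpiderVertex M K L × SpiderVertex M K L :=
    fun t => (.inr (t.1.1, t.2.1.1, t.2.2.1), .inr (t.1.2, t.2.1.2, t.2.2.2))
  have hφ : φ.Injective := by
    rintro ⟨⟨_, _⟩, ⟨_, _⟩, ⟨_, _⟩⟩ ⟨⟨_, _⟩, ⟨_, _⟩, ⟨_, _⟩⟩ h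
    simp_all [φ]
  let S₁ : Finset ((Fin M × Fin M) × (Fin K × Fin K) × (Fin L × Fin L)) :=
    univ.diag ×ˢ univ.offDiag ×ˢ ({p | (p.1 : ℕ) + p.2 = j - 2} : Finset (Fin L × Fin L))
  let S₂ : Finset ((Fin M × Fin M) × (Fin K × Fin K) × (Fin L × Fin L)) :=
    univ.offDiag ×ˢ univ ×ˢ ({p | (p.1 : ℕ) + p.2 = j - 3} : Finset (Fin L × Fin L))
  have hpairs : ({q | q.1 ≠ q.2 ∧ spiderDist q.1 q.2 = j} :
      Finset (SpiderVertex M K L × SpiderVertex M K L)) = (S₁ ∪ S₂).image φ := by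
    ext ⟨x, y⟩
    simp only [S₁, S₂, φ, mem_filter, mem_univ, true_and, mem_image, mem_union, mem_product,
      mem_diag, mem_offDiag, Prod.exists, Prod.mk.injEq]
    constructor
    · rintro ⟨-, h⟩
      rcases x with m | ⟨m, k, l⟩
      · have := spiderDist_inl_le m y; omega
      rcases y with m' | ⟨m', k', l'⟩
      · have := spiderDist_inl_le m' (.inr (m, k, l)); rw [spiderDist_comm] at this; omega
      rw [spiderDist_inr_inr_eq_iff (by omega)] at h
      refine ⟨m, m', k, k', l, l', ?_, rfl, rfl⟩
      omega
    · rintro ⟨m, m', k, k', l, l', h, rfl, rfl⟩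
      refine ⟨by simp only [ne_eq, Sum.inr.injEq, Prod.mk.injEq, not_and]; omega, (spiderDist_inr_inr_eq_iff (by omega)).mpr (by omega)⟩
  have hdisj : Disjoint S₁ S₂ := by
    simp only [S₁, S₂, Finset.disjoint_left, mem_product, mem_diag, mem_offDiag]
    tauto
  rw [hpairs, card_image_of_injective _ hφ, card_union_of_disjoint hdisj]
  simp only [S₁, S₂, card_product, diag_card, offDiag_card, card_univ, Fintype.card_fin,
    Fintype.card_prod]
  rw [card_fin_add_eq (by omega), card_fin_add_eq (by omega), ← Nat.mul_sub_one, ← Nat.mul_sub_one,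
    show 2 * L - 1 - (j - 2) = 2 * L + 1 - j by omega,
    show 2 * L - 1 - (j - 3) = 2 * L + 2 - j by omega]
  ring

end Spider

theorem spider_alpha_large_general (M K L i : ℕ) (hi2 : 2 ≤ i) (hiL : i ≤ L) :
    alphaSpider M K L (L + i) =
      M * K * (K - 1) / 2 * (L - i + 1) + M * K ^ 2 * (M - 1) / 2 * (L - i + 2) := by
  have hcount : 2 * alphaSpider M K L (L + i) =
      M * (K * (K - 1)) * (L - i + 1) + M * (M - 1) * K ^ 2 * (L - i + 2) := by
    rw [alphaSpider, SimpleGraph.two_mul_natCard_sym2_dist_eq]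
    simp only [spiderGraph_dist]
    rw [card_spiderDist_eq (by omega), show 2 * L + 1 - (L + i) = L - i + 1 by omega,
      show 2 * L + 2 - (L + i) = L - i + 2 by omega]
  have hK : 2 * (M * K * (K - 1) / 2) = M * K * (K - 1) := by
    refine Nat.two_mul_div_two_of_even ?_
    rw [mul_assoc]
    exact (Nat.even_mul_pred_self K).mul_left M
  have hM : 2 * (M * K ^ 2 * (M - 1) / 2) = M * K ^ 2 * (M - 1) := by
    refine Nat.two_mul_div_two_of_even ?_
    rw [mul_right_comm]
    exact (Nat.even_mul_pred_self M).mul_right _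
  generalize M * K * (K - 1) / 2 = A at hK ⊢
  generalize M * K ^ 2 * (M - 1) / 2 = B at hM ⊢
  apply Nat.eq_of_mul_eq_mul_left two_pos
  linear_combination hcount - (L - i + 1) * hK - (L - i + 2) * hM

/-- For all `M ≥ 2`, `K ≥ 1`, `L ≥ 2` and `2 ≤ i ≤ L`, the number of
unordered pairs of distinct vertices of `Sp(M,K,L)` at distance exactly `L + i` equals
`M·K(K−1)/2·(L − i + 1) + M·K²(M−1)/2·(L − i + 2)`. -/
theorem spider_alpha_large (M K L i : ℕ) (hM : 2 ≤ M) (hK : 1 ≤ K) (hL : 2 ≤ L)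
    (hi2 : 2 ≤ i) (hiL : i ≤ L) :
    alphaSpider M K L (L + i) =
      M * K * (K - 1) / 2 * (L - i + 1) + M * K ^ 2 * (M - 1) / 2 * (L - i + 2) :=
  spider_alpha_large_general M K L i hi2 hiL
end
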